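/- arXiv:2406.11377 — 2 statements merged into one kernel-verified Lean document; each statement's English description precedes it below -/
import Mathlib

section
/- The metric space (W, d) with the almost-basic-convergence metric is not complete. -/
open MeasureTheory Filter

/-- Right-continuity of a real function. -/
def RightCont (f : ℝ → ℝ) : Prop := ∀ x : ℝ, ContinuousWithinAt f (Set.Ici x) x

/-- The space `W` of right-continuous functions of bounded variation on `ℝ`
which vanish at `-∞`. -/
def MemW (f : ℝ → ℝ) : Prop :=
  RightCont f ∧ BoundedVariationOn f Set.univ ∧ Tendsto f atBot (nhds 0)

/-- The set of admissible `ε ≥ 0` in the definition of the metric `d`: there is a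
constant `c` such that `|f - c - g| ≤ ε` on `[-1/ε, 1/ε]` outside a set of Lebesgue
measure at most `ε` (with the convention `[-1/0, 1/0] = ℝ`). -/
def dSet (f g : ℝ → ℝ) : Set ℝ :=
  {ε : ℝ | 0 ≤ ε ∧ ∃ c : ℝ,
    volume {x : ℝ | x ∈ (if ε = 0 then Set.univ else Set.Icc (-ε⁻¹) ε⁻¹) ∧
        ε < |f x - c - g x|} ≤ ENNReal.ofReal ε}

/-- The metric on `W` metrizing almost basic convergence. -/
noncomputable def dW (f g : ℝ → ℝ) : ℝ := sInf (dSet f g)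

/-- Almost basic convergence: every subsequence has a further subsequence along
which the differences `f_n(x) - f_n(y)` converge to `f(x) - f(y)` for all `x, y`
outside a Lebesgue-null set that may depend on the subsequence. -/
def AlmBasic (F : ℕ → ℝ → ℝ) (f : ℝ → ℝ) : Prop :=
  ∀ φ : ℕ → ℕ, StrictMono φ → ∃ ψ : ℕ → ℕ, StrictMono ψ ∧ ∃ S : Set ℝ,
    volume S = 0 ∧ ∀ x ∉ S, ∀ y ∉ S,
      Tendsto (fun l => F (φ (ψ l)) x - F (φ (ψ l)) y) atTop (nhds (f x - f y))

/-!
The ramps `x ↦ min (max x 0) n` lie in `W`, and `ramp m`, `ramp n` agree on `(-∞, min m n]`,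
so they form a `d`-Cauchy sequence. If `d(ramp n, f) < 1/B` with `n ≥ B`, then for some `c`
we have `|x - c - f x| ≤ 1` outside a set of measure `< 1` in `[-B, B]`; picking such points
`x₀ ∈ [0, 1]` and `x₁ ∈ [B - 1, B]` gives `f x₁ - f x₀ ≥ B - 4`, which is impossible for a
function of bounded variation once `B` is large.
-/

open Set

section dW

variable {f g : ℝ → ℝ}

lemma two_mem_dSet : (2 : ℝ) ∈ dSet f g := by
  refine ⟨by norm_num, 0, ?_⟩
  calc volume _ ≤ volume (Icc (-(2 : ℝ)⁻¹) 2⁻¹) := measure_mono fun x hx => by simpa using hx.1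
    _ = ENNReal.ofReal (2⁻¹ - -2⁻¹) := Real.volume_Icc
    _ ≤ ENNReal.ofReal 2 := ENNReal.ofReal_le_ofReal (by norm_num)

lemma dW_le_of_forall_abs_sub_le {r c : ℝ} (hr : 0 < r)
    (h : ∀ x ∈ Icc (-r⁻¹) r⁻¹, |f x - c - g x| ≤ r) : dW f g ≤ r := by
  refine csInf_le ⟨0, fun _ hε => hε.1⟩ ⟨hr.le, c, ?_⟩
  have hempty : {x : ℝ | x ∈ (if r = 0 then univ else Icc (-r⁻¹) r⁻¹) ∧
      r < |f x - c - g x|} = ∅ := by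
    rw [if_neg hr.ne']
    ext x
    simpa using h x
  rw [hempty, measure_empty]
  exact zero_le

lemma Icc_inv_subset_window {ε r : ℝ} (hε : 0 ≤ ε) (hεr : ε < r) :
    Icc (-r⁻¹) r⁻¹ ⊆ (if ε = 0 then univ else Icc (-ε⁻¹) ε⁻¹) := by
  split_ifs with h0
  · exact subset_univ _
  · have hinv : r⁻¹ ≤ ε⁻¹ := inv_anti₀ (lt_of_le_of_ne hε (Ne.symm h0)) hεr.le
    exact Icc_subset_Icc (neg_le_neg hinv) hinv

/-- The exceptional set has measure `< 1`, so it contains no unit interval. -/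
lemma exists_abs_sub_le_of_dW_lt {r : ℝ} (hfg : dW f g < r) (hr : r ≤ 1) :
    ∃ c, ∀ u, Icc u (u + 1) ⊆ Icc (-r⁻¹) r⁻¹ → ∃ x ∈ Icc u (u + 1), |f x - c - g x| ≤ r := by
  obtain ⟨ε, ⟨hε, c, hvol⟩, hεr⟩ := exists_lt_of_csInf_lt ⟨2, two_mem_dSet⟩ hfg
  refine ⟨c, fun u hu => ?_⟩
  by_contra! hfar
  have hsub : Icc u (u + 1) ⊆ {x : ℝ | x ∈ (if ε = 0 then univ else Icc (-ε⁻¹) ε⁻¹) ∧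
      ε < |f x - c - g x|} :=
    fun x hx => ⟨Icc_inv_subset_window hε hεr (hu hx), hεr.trans (hfar x hx)⟩
  have hone : ENNReal.ofReal 1 ≤ ENNReal.ofReal ε :=
    calc ENNReal.ofReal 1 = volume (Icc u (u + 1)) := by simp [Real.volume_Icc]
      _ ≤ ENNReal.ofReal ε := (measure_mono hsub).trans hvol
  rw [ENNReal.ofReal_le_ofReal_iff hε] at hone
  linarith

end dW

def ramp (n : ℕ) (x : ℝ) : ℝ := min (max x 0) n

lemma ramp_of_mem_Icc {n : ℕ} {x : ℝ} (hx : x ∈ Icc 0 (n : ℝ)) : ramp n x = x := by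
  rw [ramp, max_eq_left hx.1, min_eq_left hx.2]

lemma ramp_memW (n : ℕ) : MemW (ramp n) := by
  refine ⟨fun x => ?_, ?_, ?_⟩
  · exact ((continuous_id.max continuous_const).min continuous_const).continuousWithinAt
  · refine ((monotone_id.max monotone_const).min monotone_const).monotoneOn univ
      |>.boundedVariationOn (C := n) fun x _ => ?_
    rw [abs_of_nonneg (le_min (le_max_right _ _) n.cast_nonneg)]
    exact min_le_right _ _
  · refine tendsto_const_nhds.congr' ?_
    filter_upwards [eventually_le_atBot 0] with x hx
    rw [ramp, max_eq_right hx, min_eq_left n.cast_nonneg]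

lemma dW_ramp_le {r : ℝ} (hr : 0 < r) {m n : ℕ} (hm : r⁻¹ ≤ m) (hn : r⁻¹ ≤ n) :
    dW (ramp m) (ramp n) ≤ r := by
  refine dW_le_of_forall_abs_sub_le (c := 0) hr fun x hx => ?_
  have hx' : max x 0 ≤ r⁻¹ := max_le hx.2 (inv_nonneg.2 hr.le)
  rw [ramp, ramp, min_eq_left (hx'.trans hm), min_eq_left (hx'.trans hn)]
  simpa using hr.le

lemma ramp_cauchy (ε : ℝ) (hε : 0 < ε) :
    ∃ N : ℕ, ∀ m ≥ N, ∀ n ≥ N, dW (ramp m) (ramp n) < ε := by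
  refine ⟨⌈(ε / 2)⁻¹⌉₊, fun m hm n hn => ?_⟩
  exact (dW_ramp_le (half_pos hε) (Nat.ceil_le.1 hm) (Nat.ceil_le.1 hn)).trans_lt
    (half_lt_self hε)

lemma not_tendsto_dW_ramp {f : ℝ → ℝ} (hf : BoundedVariationOn f univ) :
    ¬ Tendsto (fun n => dW (ramp n) f) atTop (nhds 0) := by
  intro hlim
  set V := (eVariationOn f univ).toReal
  set B := V + 5
  have hB : 5 ≤ B := le_add_of_nonneg_left ENNReal.toReal_nonneg
  have hr1 : B⁻¹ ≤ 1 := inv_le_one_of_one_le₀ (by linarith)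
  have hr0 : 0 < B⁻¹ := inv_pos.2 (by linarith)
  obtain ⟨n, hdist, hnB⟩ :=
    ((hlim.eventually (gt_mem_nhds hr0)).and (eventually_ge_atTop ⌈B⌉₊)).exists
  have hBn : B ≤ n := Nat.ceil_le.1 hnB
  obtain ⟨c, hc⟩ := exists_abs_sub_le_of_dW_lt hdist hr1
  rw [inv_inv] at hc
  obtain ⟨x₀, hx₀, h₀⟩ := hc 0 (Icc_subset_Icc (by linarith) (by linarith))
  obtain ⟨x₁, hx₁, h₁⟩ := hc (B - 1) (Icc_subset_Icc (by linarith) (by linarith))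
  rw [ramp_of_mem_Icc ⟨hx₀.1, by linarith [hx₀.2]⟩] at h₀
  rw [ramp_of_mem_Icc ⟨by linarith [hx₁.1], by linarith [hx₁.2]⟩] at h₁
  have hvar : f x₁ - f x₀ ≤ V := hf.sub_le (mem_univ _) (mem_univ _)
  linarith [abs_le.1 h₀, abs_le.1 h₁, hx₀.2, hx₁.1]

/-- The metric space `(W, d)` is not complete: there is a `d`-Cauchy sequence in
`W` with no limit in `W`. -/
theorem stmt12 :
    ∃ F : ℕ → ℝ → ℝ, (∀ n, MemW (F n)) ∧
      (∀ ε : ℝ, 0 < ε → ∃ N : ℕ, ∀ m ≥ N, ∀ n ≥ N, dW (F m) (F n) < ε) ∧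
      ¬ ∃ f : ℝ → ℝ, MemW f ∧ Tendsto (fun n => dW (F n) f) atTop (nhds 0) :=
  ⟨ramp, ramp_memW, ramp_cauchy, fun ⟨_, hf, hlim⟩ => not_tendsto_dW_ramp hf.2.1 hlim⟩
end

section
/- Let f_n, f be right-continuous functions of bounded variation on ℝ. Then f_n converges basically to f if and only if there exist constants (c_n) ⊂ ℝ such that every subsequence of (f_n) has a further subsequence (f_{n_{k_l}}) and an at most countable set S with f_{n_{k_l}}(x) − c_{n_{k_l}} → f(x) for all x ∈ ℝ \ S. -/
open MeasureTheory Filter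

/-- The space `V` of right-continuous functions of bounded variation on `ℝ`. -/
def MemV (f : ℝ → ℝ) : Prop := RightCont f ∧ BoundedVariationOn f Set.univ

/-- Basic convergence: every subsequence has a further subsequence along which
the differences `f_n(x) - f_n(y)` converge to `f(x) - f(y)` for all `x, y` outside
an at most countable set that may depend on the subsequence. -/
def BasicConv (F : ℕ → ℝ → ℝ) (f : ℝ → ℝ) : Prop :=
  ∀ φ : ℕ → ℕ, StrictMono φ → ∃ ψ : ℕ → ℕ, StrictMono ψ ∧ ∃ S : Set ℝ,
    S.Countable ∧ ∀ x ∉ S, ∀ y ∉ S,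
      Tendsto (fun l => F (φ (ψ l)) x - F (φ (ψ l)) y) atTop (nhds (f x - f y))

/-! ### Auxiliary material: a median of a function on `[0,1]` -/

noncomputable def medMeas : Measure ℝ := volume.restrict (Set.Icc 0 1)

lemma medMeas_univ : medMeas Set.univ = 1 := by
  simp [medMeas, Real.volume_Icc]

instance : IsFiniteMeasure medMeas :=
  ⟨by rw [medMeas_univ]; exact ENNReal.one_lt_top⟩

/-- A median of `g` with respect to Lebesgue measure on `[0,1]`. -/
noncomputable def med (g : ℝ → ℝ) : ℝ :=
  sInf {t : ℝ | 1/2 ≤ medMeas {y | g y ≤ t}}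

lemma med_le {g : ℝ → ℝ} {B t : ℝ} (hB : ∀ y, |g y| ≤ B)
    (ht : 1/2 ≤ medMeas {y | g y ≤ t}) : med g ≤ t := by
  have hbdd : BddBelow {t : ℝ | 1/2 ≤ medMeas {y | g y ≤ t}} := by
    refine ⟨-B, fun t' ht' => ?_⟩
    rw [Set.mem_setOf_eq] at ht'
    have hne : {y | g y ≤ t'}.Nonempty := by
      apply MeasureTheory.nonempty_of_measure_ne_zero (μ := medMeas)
      intro h0
      rw [h0] at ht'
      simp at ht'
    obtain ⟨y, hy⟩ := hne
    have := (abs_le.1 (hB y)).1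
    exact le_trans this hy
  exact csInf_le hbdd ht

lemma le_med {g : ℝ → ℝ} {B t : ℝ} (hB : ∀ y, |g y| ≤ B)
    (ht : medMeas {y | g y ≤ t} < 1/2) : t ≤ med g := by
  have hne : {t : ℝ | 1/2 ≤ medMeas {y | g y ≤ t}}.Nonempty := by
    refine ⟨B, ?_⟩
    have : {y | g y ≤ B} = Set.univ := by
      ext y; simp [(abs_le.1 (hB y)).2]
    rw [Set.mem_setOf_eq, this, medMeas_univ]
    exact ENNReal.half_le_self
  apply le_csInf hne
  intro a ha
  by_contra hlt
  push_neg at hlt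
  have : medMeas {y | g y ≤ a} ≤ medMeas {y | g y ≤ t} :=
    measure_mono (fun y hy => le_trans hy hlt.le)
  exact absurd (le_trans ha this) (not_le.2 ht)

lemma med_est {g : ℝ → ℝ} {B d ε : ℝ} (hB : ∀ y, |g y| ≤ B) (hε : 0 < ε)
    (hbad : medMeas {y | ε ≤ |g y - d|} < 1/2) : |med g - d| ≤ 2 * ε := by
  -- upper bound
  have hgood : 1/2 ≤ medMeas {y | g y ≤ d + ε} := by
    by_contra hlt
    push_neg at hlt
    have hcover : (Set.univ : Set ℝ) ⊆ {y | ε ≤ |g y - d|} ∪ {y | g y ≤ d + ε} := by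
      intro y _
      by_cases h : ε ≤ |g y - d|
      · exact Or.inl h
      · push_neg at h
        exact Or.inr (by have := (abs_lt.1 h).2; simp only [Set.mem_setOf_eq]; linarith)
    have h1 : (1 : ENNReal) ≤ medMeas ({y | ε ≤ |g y - d|} ∪ {y | g y ≤ d + ε}) := by
      rw [← medMeas_univ]; exact measure_mono hcover
    have h2 : medMeas ({y | ε ≤ |g y - d|} ∪ {y | g y ≤ d + ε})
        ≤ medMeas {y | ε ≤ |g y - d|} + medMeas {y | g y ≤ d + ε} := measure_union_le _ _
    have h3 : medMeas {y | ε ≤ |g y - d|} + medMeas {y | g y ≤ d + ε}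
        < 1/2 + 1/2 := ENNReal.add_lt_add hbad hlt
    have h4 : (1/2 : ENNReal) + 1/2 = 1 := ENNReal.add_halves 1
    rw [h4] at h3
    exact absurd (lt_of_le_of_lt (le_trans h1 h2) h3) (lt_irrefl _)
  have hup : med g ≤ d + ε := med_le hB hgood
  -- lower bound
  have hlow : d - 2*ε ≤ med g := by
    apply le_med hB
    refine lt_of_le_of_lt (measure_mono ?_) hbad
    intro y hy
    simp only [Set.mem_setOf_eq] at hy ⊢
    rw [abs_sub_comm]
    calc ε ≤ 2*ε := by linarith
    _ ≤ d - g y := by linarith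
    _ ≤ |d - g y| := le_abs_self _
  rw [abs_le]
  constructor <;> linarith

/-! ### Facts about `MemV` functions -/

lemma MemV.bdd {f : ℝ → ℝ} (hf : MemV f) : ∃ B, ∀ x, |f x| ≤ B := by
  refine ⟨|f 0| + (eVariationOn f Set.univ).toReal, fun x => ?_⟩
  have := hf.2.dist_le (Set.mem_univ x) (Set.mem_univ 0)
  rw [Real.dist_eq] at this
  calc |f x| = |f x - f 0 + f 0| := by ring_nf
  _ ≤ |f x - f 0| + |f 0| := abs_add_le _ _
  _ ≤ |f 0| + (eVariationOn f Set.univ).toReal := by linarith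

lemma MemV.measurable {f : ℝ → ℝ} (hf : MemV f) : Measurable f := by
  obtain ⟨p, q, hp, hq, hpq⟩ :=
    hf.2.locallyBoundedVariationOn.exists_monotoneOn_sub_monotoneOn
  have : f = fun x => p x - q x := by rw [hpq]; rfl
  rw [this]
  exact ((monotoneOn_univ.1 hp).measurable).sub ((monotoneOn_univ.1 hq).measurable)

/-- Key lemma: if `g l - d l → 0` off a countable set, then `med (g l) - d l → 0`. -/
lemma med_close {g : ℕ → ℝ → ℝ} {d : ℕ → ℝ} (hmeas : ∀ l, Measurable (g l))
    {B : ℕ → ℝ} (hB : ∀ l y, |g l y| ≤ B l) {S : Set ℝ} (hS : S.Countable)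
    (hconv : ∀ y ∉ S, Tendsto (fun l => g l y - d l) atTop (nhds 0)) :
    Tendsto (fun l => med (g l) - d l) atTop (nhds 0) := by
  have hS0 : medMeas S = 0 := by
    apply measure_mono_null (le_refl S) ?_
    exact le_antisymm (le_trans (Measure.restrict_le_self (s := Set.Icc 0 1) (μ := volume) S)
      (le_of_eq (hS.measure_zero volume))) zero_le
  have hTIM : TendstoInMeasure medMeas (fun l y => g l y - d l) atTop (fun _ => 0) := by
    apply tendstoInMeasure_of_tendsto_ae
    · exact fun l => ((hmeas l).sub measurable_const).aestronglyMeasurable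
    · have : ∀ᵐ y ∂medMeas, y ∉ S := by
        rw [MeasureTheory.ae_iff]
        apply measure_mono_null _ hS0
        intro y hy
        simpa using hy
      filter_upwards [this] with y hy
      exact hconv y hy
  rw [Metric.tendsto_atTop]
  intro ε hε
  have h3 : 0 < ε/3 := by linarith
  have := (tendstoInMeasure_iff_dist.1 hTIM (ε/3) h3).eventually (Iio_mem_nhds (by norm_num : (0:ENNReal) < 1/2))
  rw [eventually_atTop] at this
  obtain ⟨N, hN⟩ := this
  refine ⟨N, fun n hn => ?_⟩
  have hbad : medMeas {y | ε/3 ≤ |g n y - d n|} < 1/2 := by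
    have := hN n hn
    simpa [Real.dist_eq] using this
  have := med_est (hB n) h3 hbad
  rw [Real.dist_0_eq_abs]
  calc |med (g n) - d n| ≤ 2 * (ε/3) := this
  _ < ε := by linarith

lemma exists_not_mem_of_countable {S : Set ℝ} (hS : S.Countable) : ∃ x, x ∉ S := by
  by_contra h
  push_neg at h
  have : (Set.univ : Set ℝ).Countable := hS.mono (fun x _ => h x)
  exact absurd (Set.countable_univ_iff.mp this)
    (not_countable_iff.mpr inferInstance)

/-- For right-continuous bounded-variation `f_n, f`: `f_n ⇒ f` basically if and
only if there are constants `(c_n)` such that every subsequence has a further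
subsequence with `f_{n_{k_l}}(x) - c_{n_{k_l}} → f(x)` for all `x` outside an at
most countable set. -/
theorem stmt15 (F : ℕ → ℝ → ℝ) (f : ℝ → ℝ) (hF : ∀ n, MemV (F n)) (hf : MemV f) :
    BasicConv F f ↔ ∃ c : ℕ → ℝ, ∀ φ : ℕ → ℕ, StrictMono φ →
      ∃ ψ : ℕ → ℕ, StrictMono ψ ∧ ∃ S : Set ℝ, S.Countable ∧
        ∀ x ∉ S, Tendsto (fun l => F (φ (ψ l)) x - c (φ (ψ l))) atTop (nhds (f x)) := by
  constructor
  · -- forward direction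
    intro hbc
    refine ⟨fun n => med (fun y => F n y - f y), ?_⟩
    intro φ hφ
    obtain ⟨ψ, hψ, S, hS, hdiff⟩ := hbc φ hφ
    refine ⟨ψ, hψ, S, hS, ?_⟩
    obtain ⟨x₀, hx₀⟩ := exists_not_mem_of_countable hS
    -- centering constants along the subsequence
    set σ : ℕ → ℕ := fun l => φ (ψ l) with hσ
    set d : ℕ → ℝ := fun l => F (σ l) x₀ - f x₀ with hd
    -- bounds for g l = F (σ l) - f
    obtain ⟨Bf, hBf⟩ := hf.bdd
    have hBl : ∀ l, ∃ B, ∀ y, |F (σ l) y - f y| ≤ B := by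
      intro l
      obtain ⟨BF, hBF⟩ := (hF (σ l)).bdd
      exact ⟨BF + Bf, fun y => le_trans (abs_sub _ _) (add_le_add (hBF y) (hBf y))⟩
    choose B hB using hBl
    have hmeas : ∀ l, Measurable (fun y => F (σ l) y - f y) :=
      fun l => ((hF (σ l)).measurable).sub hf.measurable
    have hconv : ∀ y ∉ S, Tendsto (fun l => (F (σ l) y - f y) - d l) atTop (nhds 0) := by
      intro y hy
      have h1 := hdiff y hy x₀ hx₀
      have h2 : Tendsto (fun l => (F (σ l) y - F (σ l) x₀) - (f y - f x₀)) atTop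
          (nhds ((f y - f x₀) - (f y - f x₀))) := h1.sub_const _
      rw [sub_self] at h2
      apply h2.congr
      intro l
      simp only [hd]
      ring
    have hc : Tendsto (fun l => med (fun y => F (σ l) y - f y) - d l) atTop (nhds 0) :=
      med_close hmeas hB hS hconv
    intro x hx
    have h1 := hdiff x hx x₀ hx₀
    have h2 : Tendsto (fun l => (F (σ l) x - F (σ l) x₀)
        - (med (fun y => F (σ l) y - f y) - d l) + f x₀) atTop
        (nhds ((f x - f x₀) - 0 + f x₀)) := (h1.sub hc).add_const _
    have h3 : (f x - f x₀) - 0 + f x₀ = f x := by ring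
    rw [h3] at h2
    apply h2.congr
    intro l
    simp only [hd]
    ring
  · -- backward direction
    rintro ⟨c, hc⟩ φ hφ
    obtain ⟨ψ, hψ, S, hS, h⟩ := hc φ hφ
    refine ⟨ψ, hψ, S, hS, fun x hx y hy => ?_⟩
    have := (h x hx).sub (h y hy)
    apply this.congr
    intro l
    ring
end
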